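/- arXiv:2510.20227 — 2 statements merged into one kernel-verified Lean document; each statement's English description precedes it below -/
import Mathlib

section
/- Let f be convex and differentiable with L-Lipschitz gradient on a real Hilbert space. Then for all x, y: ⟨∇f(x) − ∇f(y), x − y⟩ ≥ (1/L)‖∇f(x) − ∇f(y)‖² (the Baillon–Haddad co-coercivity inequality). -/
/-!
Convexity gives the tangent lower bound `f a + ⟪∇f a, b - a⟫ ≤ f b`, and the Lipschitz gradient
the quadratic upper bound `f b ≤ f a + ⟪∇f a, b - a⟫ + L / 2 * ‖b - a‖ ^ 2`. Playing the two off
at a gradient step sharpens the lower bound by `‖∇f b - ∇f a‖ ^ 2 / (2 * L)`; adding the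
sharpened bound for `(x, y)` and for `(y, x)` gives co-coercivity.
-/

open scoped RealInnerProductSpace NNReal

section

variable {H : Type*} [NormedAddCommGroup H] [InnerProductSpace ℝ H] [CompleteSpace H]

theorem HasGradientAt.hasDerivAt_comp_add_smul {f : H → ℝ} {f' a v : H} {t : ℝ}
    (hf : HasGradientAt f f' (a + t • v)) :
    HasDerivAt (fun s : ℝ ↦ f (a + s • v)) ⟪f', v⟫ t := by
  have hline : HasDerivAt (fun s : ℝ ↦ a + s • v) v t := by
    simpa using ((hasDerivAt_id t).smul_const v).const_add a
  simpa [Function.comp_def] using hf.hasFDerivAt.comp_hasDerivAt t hline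

theorem ConvexOn.add_inner_le_of_hasGradientAt {f : H → ℝ} {f' a : H}
    (hf : ConvexOn ℝ Set.univ f) (hf' : HasGradientAt f f' a) (b : H) :
    f a + ⟪f', b - a⟫ ≤ f b := by
  have hconv : ConvexOn ℝ Set.univ (fun s : ℝ ↦ f (a + s • (b - a))) := by
    simpa [Function.comp_def, AffineMap.lineMap_apply, add_comm]
      using hf.comp_affineMap (AffineMap.lineMap a b)
  have hderiv : HasDerivAt (fun s : ℝ ↦ f (a + s • (b - a))) ⟪f', b - a⟫ 0 :=
    (by simpa using hf' : HasGradientAt f f' (a + (0 : ℝ) • (b - a))).hasDerivAt_comp_add_smul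
  have hslope := hconv.le_slope_of_hasDerivWithinAt_Ioi (Set.mem_univ 0) (Set.mem_univ 1)
    one_pos hderiv.hasDerivWithinAt
  simp only [slope_def_field, one_smul, add_sub_cancel, zero_smul, add_zero, sub_zero, div_one]
    at hslope
  linarith

theorem le_add_inner_add_sq_norm_of_lipschitzWith {f : H → ℝ} {g : H → H} {K : ℝ≥0}
    (hf : ∀ x, HasGradientAt f (g x) x) (hg : LipschitzWith K g) (a b : H) :
    f b ≤ f a + ⟪g a, b - a⟫ + K / 2 * ‖b - a‖ ^ 2 := by
  set v := b - a
  let φ : ℝ → ℝ := fun s ↦ f (a + s • v) - s * ⟪g a, v⟫ - K / 2 * s ^ 2 * ‖v‖ ^ 2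
  have hφ' : ∀ s, HasDerivAt φ (⟪g (a + s • v) - g a, v⟫ - K * s * ‖v‖ ^ 2) s := by
    intro s
    refine ((((hf (a + s • v)).hasDerivAt_comp_add_smul).sub
      ((hasDerivAt_id s).mul_const ⟪g a, v⟫)).sub
      (((hasDerivAt_pow 2 s).const_mul (K / 2 : ℝ)).mul_const (‖v‖ ^ 2))).congr_deriv ?_
    simp only [inner_sub_left]
    ring
  have hφ'_nonpos : ∀ s ∈ interior (Set.Ici (0 : ℝ)),
      ⟪g (a + s • v) - g a, v⟫ - K * s * ‖v‖ ^ 2 ≤ 0 := by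
    intro s hs
    rw [interior_Ici, Set.mem_Ioi] at hs
    have hlip : ‖g (a + s • v) - g a‖ ≤ K * (s * ‖v‖) := by
      simpa [dist_eq_norm, norm_smul, abs_of_pos hs] using hg.dist_le_mul (a + s • v) a
    refine sub_nonpos.2 ?_
    calc ⟪g (a + s • v) - g a, v⟫ ≤ ‖g (a + s • v) - g a‖ * ‖v‖ := real_inner_le_norm _ _
      _ ≤ K * (s * ‖v‖) * ‖v‖ := by gcongr
      _ = K * s * ‖v‖ ^ 2 := by ring
  have hanti : AntitoneOn φ (Set.Ici 0) :=
    antitoneOn_of_hasDerivWithinAt_nonpos (convex_Ici 0)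
      (fun s _ ↦ (hφ' s).continuousAt.continuousWithinAt)
      (fun s _ ↦ (hφ' s).hasDerivWithinAt) hφ'_nonpos
  have hφ₁ := hanti (Set.mem_Ici.2 le_rfl) (Set.mem_Ici.2 zero_le_one) zero_le_one
  simp only [one_smul, add_sub_cancel, one_mul, one_pow, mul_one, zero_smul, add_zero, zero_mul,
    sub_zero, ne_eq, OfNat.ofNat_ne_zero, not_false_eq_true, zero_pow, mul_zero, tsub_le_iff_right,
    φ, v] at hφ₁
  linarith

theorem ConvexOn.add_inner_add_sq_norm_le {f : H → ℝ} {g : H → H} {K : ℝ≥0}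
    (hconv : ConvexOn ℝ Set.univ f) (hf : ∀ x, HasGradientAt f (g x) x)
    (hg : LipschitzWith K g) (hK : 0 < K) (a b : H) :
    f a + ⟪g a, b - a⟫ + ‖g b - g a‖ ^ 2 / (2 * K) ≤ f b := by
  -- `b - w / K` is a gradient step from `b` for `f - ⟪g a, ·⟫`, whose minimum is attained at `a`.
  set w := g b - g a
  have hlower := hconv.add_inner_le_of_hasGradientAt (hf a) (b - (K : ℝ)⁻¹ • w)
  have hupper := le_add_inner_add_sq_norm_of_lipschitzWith hf hg b (b - (K : ℝ)⁻¹ • w)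
  have hca : b - (K : ℝ)⁻¹ • w - a = (b - a) - (K : ℝ)⁻¹ • w := by abel
  have hcb : b - (K : ℝ)⁻¹ • w - b = -((K : ℝ)⁻¹ • w) := by abel
  have hw : ⟪g b, w⟫ - ⟪g a, w⟫ = ‖w‖ ^ 2 := by
    rw [← inner_sub_left, real_inner_self_eq_norm_sq]
  rw [hca, inner_sub_right, real_inner_smul_right] at hlower
  rw [hcb, inner_neg_right, real_inner_smul_right, norm_neg, norm_smul, Real.norm_eq_abs,
    abs_of_pos (inv_pos.2 (NNReal.coe_pos.2 hK))] at hupper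
  have hK' : (K : ℝ) ≠ 0 := by positivity
  have hgain : ‖w‖ ^ 2 / (2 * K) =
      (K : ℝ)⁻¹ * (⟪g b, w⟫ - ⟪g a, w⟫) - K / 2 * ((K : ℝ)⁻¹ * ‖w‖) ^ 2 := by
    rw [hw]; field_simp; ring
  linarith

end

/-- Baillon–Haddad co-coercivity inequality for a convex function with
Lipschitz gradient on a real Hilbert space. -/
theorem baillon_haddad_cocoercivity
    {H : Type*} [NormedAddCommGroup H] [InnerProductSpace ℝ H] [CompleteSpace H]
    (f : H → ℝ) (g : H → H) (L : ℝ) (hL : 0 < L)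
    (hconv : ConvexOn ℝ Set.univ f)
    (hdiff : ∀ x, HasGradientAt f (g x) x)
    (hlip : LipschitzWith (Real.toNNReal L) g) :
    ∀ x y : H, ⟪g x - g y, x - y⟫ ≥ (1 / L) * ‖g x - g y‖ ^ 2 := by
  intro x y
  have hK : 0 < L.toNNReal := Real.toNNReal_pos.2 hL
  have hxy := hconv.add_inner_add_sq_norm_le hdiff hlip hK x y
  have hyx := hconv.add_inner_add_sq_norm_le hdiff hlip hK y x
  rw [Real.coe_toNNReal L hL.le, norm_sub_rev] at hxy
  rw [Real.coe_toNNReal L hL.le] at hyx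
  have hinner : ⟪g x - g y, x - y⟫ = -(⟪g x, y - x⟫ + ⟪g y, x - y⟫) := by
    rw [inner_sub_left, ← neg_sub x y, inner_neg_right]; ring
  have hsplit : 1 / L * ‖g x - g y‖ ^ 2 = 2 * (‖g x - g y‖ ^ 2 / (2 * L)) := by
    field_simp
  linarith
end

section
/- Let F : ℕ → ℝ be a nonincreasing nonnegative sequence, and suppose there exist constants γ > 0, c > 0, and θ ∈ (0, 1/2] such that for all k with F_k > 0: c(1−θ)·F_k^{−θ}·(F_k − F_{k+1}) ≥ γ. Then setting G_k := F_k^{1−θ}, we have G_k − G_{k+1} ≥ γ/c for all k with F_k > 0; consequently F_k = 0 for all k ≥ ⌈c·F_0^{1−θ}/γ⌉. -/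
/-! Bernoulli's inequality, i.e. concavity of `x ↦ x ^ (1 - θ)`, turns the KL inequality into a
decrease of `G_k = F_k ^ (1 - θ)` by at least `γ / c` per step while `F_k > 0`. Telescoping gives
`k * (γ / c) ≤ G_0 - G_k < G_0` for such `k`, which fails once `k ≥ c * G_0 / γ`. -/

open Real

theorem mul_rpow_sub_one_mul_sub_le_rpow_sub_rpow {a b p : ℝ} (ha : 0 < a) (hb : 0 ≤ b)
    (hp0 : 0 ≤ p) (hp1 : p ≤ 1) :
    p * a ^ (p - 1) * (a - b) ≤ a ^ p - b ^ p := by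
  have bernoulli : (b / a) ^ p ≤ 1 + p * (b / a - 1) := by
    simpa using rpow_one_add_le_one_add_mul_self (s := b / a - 1)
      (by linarith [div_nonneg hb ha.le]) hp0 hp1
  have hbp : b ^ p = a ^ p * (b / a) ^ p := by
    rw [div_rpow hb ha.le, mul_div_cancel₀ _ (rpow_pos_of_pos ha p).ne']
  have hap : a ^ (p - 1) = a ^ p / a := rpow_sub_one ha.ne' p
  calc p * a ^ (p - 1) * (a - b) = a ^ p - a ^ p * (1 + p * (b / a - 1)) := by
        rw [hap]; field_simp; ring
    _ ≤ a ^ p - b ^ p := by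
        rw [hbp]; gcongr

theorem mul_le_sub_of_forall_le_sub_succ {u : ℕ → ℝ} {P : ℕ → Prop} {δ : ℝ}
    (hP : ∀ k, P (k + 1) → P k) (hu : ∀ k, P k → δ ≤ u k - u (k + 1)) :
    ∀ k, P k → k * δ ≤ u 0 - u k
  | 0, _ => by simp
  | k + 1, hk => by
    have := mul_le_sub_of_forall_le_sub_succ hP hu k (hP k hk)
    have := hu k (hP k hk)
    push_cast
    linarith

/-- KL-type descent with exponent `θ ∈ (0, 1/2]`: the transformed sequence
`G_k = F_k^{1-θ}` decreases by at least `γ/c` per step while positive,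
hence `F` terminates at zero after finitely many steps. -/
theorem kl_descent_linear_regime
    (F : ℕ → ℝ) (γ c θ : ℝ)
    (hγ : 0 < γ) (hc : 0 < c) (hθ : θ ∈ Set.Ioc (0 : ℝ) (1 / 2))
    (hnonneg : ∀ k, 0 ≤ F k)
    (hmono : ∀ k, F (k + 1) ≤ F k)
    (hKL : ∀ k, 0 < F k → c * (1 - θ) * F k ^ (-θ) * (F k - F (k + 1)) ≥ γ) :
    (∀ k, 0 < F k → F k ^ (1 - θ) - F (k + 1) ^ (1 - θ) ≥ γ / c) ∧
    (∀ k : ℕ, c * F 0 ^ (1 - θ) / γ ≤ (k : ℝ) → F k = 0) := by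
  obtain ⟨hθ0, hθ1⟩ := hθ
  have descent : ∀ k, 0 < F k → γ / c ≤ F k ^ (1 - θ) - F (k + 1) ^ (1 - θ) := by
    intro k hk
    have tangent := mul_rpow_sub_one_mul_sub_le_rpow_sub_rpow (p := 1 - θ) hk (hnonneg (k + 1))
      (by linarith) (by linarith)
    rw [sub_sub_cancel_left] at tangent
    rw [div_le_iff₀' hc]
    calc γ ≤ c * ((1 - θ) * F k ^ (-θ) * (F k - F (k + 1))) := by linarith [hKL k hk]
      _ ≤ _ := by gcongr
  refine ⟨descent, fun k hk => ?_⟩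
  by_contra hne
  have hpos : 0 < F k := (hnonneg k).lt_of_ne' hne
  have telescoped := mul_le_sub_of_forall_le_sub_succ
    (fun j hj => hj.trans_le (hmono j)) descent k hpos
  have hGk : 0 < F k ^ (1 - θ) := rpow_pos_of_pos hpos _
  have hG0 : k * (γ / c) < F 0 ^ (1 - θ) := by linarith
  rw [mul_div_assoc', div_lt_iff₀ hc] at hG0
  rw [div_le_iff₀ hγ] at hk
  linarith
end
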